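/- Let R be a commutative ring, J an ideal, and ∂₁,...,∂ᵣ derivations of R whose R-span M ⊆ Der(R) is closed under the Lie bracket. Let f ∈ R have ord(f) ≥ n (i.e. ∂_I(f) ∈ J for every multi-index I of length < n). Then for any multi-index I of length n and any permutation J' of I, the difference ∂_{J'}(f) − ∂_I(f) lies in J. -/

import Mathlib

/-- Composition of derivations along a multi-index; the empty list gives the identity. -/
def compAlong {R : Type*} [CommRing R] {ι : Type*} (D : ι → Derivation ℤ R R)
    (I : List ι) (f : R) : R :=
  (I.map D).foldr (fun d x => d x) f

/-!
Let `T k = derivSpan D f k` be the `R`-span of the `∂_I f` with `|I| < k`. By the Leibniz rule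
every element of the span `M` of the `∂ᵢ` maps `T k` into `T (k + 1)`. Hence
`∂_{J'} f - ∂_I f ∈ T |I|`, by induction on the permutation: a swap of the first two entries
contributes `[∂_a, ∂_b] (∂_{I₂} f)`, which lies in `T |I|` because `[∂_a, ∂_b] ∈ M`, and a
common first entry raises the index of `T` by one. Finally `T n ⊆ J` when `ord f ≥ n`.
-/

section DerivSpan

variable {R ι : Type*} [CommRing R] (D : ι → Derivation ℤ R R) (f : R)

def derivSpan (k : ℕ) : Submodule R R :=
  Submodule.span R {g | ∃ I : List ι, I.length < k ∧ compAlong D I f = g}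

lemma compAlong_cons (i : ι) (I : List ι) (g : R) :
    compAlong D (i :: I) g = D i (compAlong D I g) :=
  rfl

lemma compAlong_mem_derivSpan {I : List ι} {k : ℕ} (hI : I.length < k) :
    compAlong D I f ∈ derivSpan D f k :=
  Submodule.subset_span ⟨I, hI, rfl⟩

lemma derivSpan_mono : Monotone (derivSpan D f) := fun _ _ hkl =>
  Submodule.span_mono (by rintro _ ⟨I, hI, rfl⟩; exact ⟨I, hI.trans_le hkl, rfl⟩)

lemma derivSpan_le_of_forall_mem {J : Submodule R R} {n : ℕ}
    (hf : ∀ I : List ι, I.length < n → compAlong D I f ∈ J) : derivSpan D f n ≤ J :=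
  Submodule.span_le.mpr (by rintro _ ⟨I, hI, rfl⟩; exact hf I hI)

lemma apply_mem_derivSpan_succ (i : ι) {k : ℕ} {g : R} (hg : g ∈ derivSpan D f k) :
    D i g ∈ derivSpan D f (k + 1) := by
  induction hg using Submodule.span_induction with
  | mem g hg =>
    obtain ⟨I, hI, rfl⟩ := hg
    exact compAlong_mem_derivSpan D f (I := i :: I) (by simpa using hI)
  | zero => simp
  | add a b _ _ ha hb => rw [map_add]; exact add_mem ha hb
  | smul c g hg ih =>
    rw [smul_eq_mul, Derivation.leibniz, smul_eq_mul g, mul_comm, ← smul_eq_mul]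
    exact add_mem (Submodule.smul_mem _ _ ih)
      (Submodule.smul_mem _ _ (derivSpan_mono D f k.le_succ hg))

lemma apply_mem_derivSpan_succ_of_mem_span {d : Derivation ℤ R R}
    (hd : d ∈ Submodule.span R (Set.range D)) {k : ℕ} {g : R} (hg : g ∈ derivSpan D f k) :
    d g ∈ derivSpan D f (k + 1) := by
  induction hd using Submodule.span_induction with
  | mem d hd => obtain ⟨i, rfl⟩ := hd; exact apply_mem_derivSpan_succ D f i hg
  | zero => simp
  | add a b _ _ ha hb => rw [Derivation.add_apply]; exact add_mem ha hb
  | smul c d _ ih => rw [Derivation.smul_apply]; exact Submodule.smul_mem _ _ ih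

lemma compAlong_sub_mem_derivSpan_of_perm
    (hLie : ∀ i j, ⁅D i, D j⁆ ∈ Submodule.span R (Set.range D)) {I I' : List ι}
    (h : I'.Perm I) : compAlong D I' f - compAlong D I f ∈ derivSpan D f I.length := by
  induction h with
  | nil => simp
  | cons i _ ih =>
    simpa only [compAlong_cons, map_sub, List.length_cons] using apply_mem_derivSpan_succ D f i ih
  | swap i j I =>
    have hbracket : compAlong D (j :: i :: I) f - compAlong D (i :: j :: I) f =
        ⁅D j, D i⁆ (compAlong D I f) := by
      simp only [compAlong_cons, Derivation.commutator_apply]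
    rw [hbracket]
    exact apply_mem_derivSpan_succ_of_mem_span D f (hLie j i)
      (compAlong_mem_derivSpan D f (Nat.lt_succ_self _))
  | trans _ h₂₃ ih₁₂ ih₂₃ =>
    rw [← sub_add_sub_cancel]
    exact add_mem (h₂₃.length_eq ▸ ih₁₂) ih₂₃

end DerivSpan

/-- If the `R`-span of the `∂ᵢ` is closed under the Lie bracket and `∂_I(f) ∈ J` for all
multi-indices of length `< n`, then for any multi-index `I` of length `n` and any
permutation `J'` of `I`, one has `∂_{J'}(f) − ∂_I(f) ∈ J`. -/
theorem stmt_6 {R : Type*} [CommRing R] (J : Ideal R) {r : ℕ}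
    (D : Fin r → Derivation ℤ R R)
    (hLie : ∀ d ∈ Submodule.span R (Set.range D), ∀ e ∈ Submodule.span R (Set.range D),
      ⁅d, e⁆ ∈ Submodule.span R (Set.range D))
    (n : ℕ) (f : R)
    (hf : ∀ I : List (Fin r), I.length < n → compAlong D I f ∈ J) :
    ∀ I J' : List (Fin r), I.length = n → J'.Perm I →
      compAlong D J' f - compAlong D I f ∈ J := by
  rintro I J' rfl hperm
  have hLie' : ∀ i j, ⁅D i, D j⁆ ∈ Submodule.span R (Set.range D) := fun i j =>
    hLie _ (Submodule.subset_span ⟨i, rfl⟩) _ (Submodule.subset_span ⟨j, rfl⟩)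
  exact derivSpan_le_of_forall_mem D f hf (compAlong_sub_mem_derivSpan_of_perm D f hLie' hperm)
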